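/- arXiv:1805.12405 — 3 statements merged into one kernel-verified Lean document; each statement's English description precedes it below -/
import Mathlib

section
/- The word w' defined by w'_k = a if F_a(w,k) = F_a(w,k−1)+1 and w'_k = b otherwise (for 1 ≤ k ≤ |w|) satisfies P_a(w',k) = F_a(w',k) for all 0 ≤ k ≤ |w|; i.e., w' is prefix normal. -/
/- Binary words are `List Bool`, with letter `a = false` and `b = true`
   (so that `a < b` in the `Bool` order). -/

/-- number of `a`'s in the prefix of length `k` -/
def Pa (w : List Bool) (k : ℕ) : ℕ := (w.take k).count false

/-- number of `b`'s in the prefix of length `k` -/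
def Pb (w : List Bool) (k : ℕ) : ℕ := (w.take k).count true

/-- maximum number of `a`'s in a factor of `w` of length `k` -/
noncomputable def Fa (w : List Bool) (k : ℕ) : ℕ :=
  sSup {n | ∃ v : List Bool, v <:+: w ∧ v.length = k ∧ v.count false = n}

/-- maximum number of `b`'s in a factor of `w` of length `k` -/
noncomputable def Fb (w : List Bool) (k : ℕ) : ℕ :=
  sSup {n | ∃ v : List Bool, v <:+: w ∧ v.length = k ∧ v.count true = n}

/-- minimum number of `a`'s in a factor of `w` of length `k` -/
noncomputable def fa (w : List Bool) (k : ℕ) : ℕ :=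
  sInf {n | ∃ v : List Bool, v <:+: w ∧ v.length = k ∧ v.count false = n}

/-- `w` is prefix normal w.r.t. `a`: no factor has more `a`'s than the prefix
    of the same length -/
def PrefixNormal (w : List Bool) : Prop :=
  ∀ v : List Bool, v <:+: w → v.count false ≤ Pa w v.length

/-- position of the `i`-th `a` in `w` -/
noncomputable def posA (w : List Bool) (i : ℕ) : ℕ := sInf {k | Pa w k = i}

/-- `u` is the prefix normal form of `w` w.r.t. `a` -/
def IsPNFa (w u : List Bool) : Prop :=
  u.length = w.length ∧ ∀ k ≤ w.length, Pa u k = Fa w k ∧ Fa u k = Fa w k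

/-- `u` is the prefix normal form of `w` w.r.t. `b` -/
def IsPNFb (w u : List Bool) : Prop :=
  u.length = w.length ∧ ∀ k ≤ w.length, Pb u k = Fb w k ∧ Fb u k = Fb w k

/-- the Parikh set of `w`: Parikh vectors `(|v|_a, |v|_b)` of factors of `w` -/
def ParikhSet (w : List Bool) : Set (ℕ × ℕ) :=
  {p | ∃ v : List Bool, v <:+: w ∧ p = (v.count false, v.count true)}

/-- Lyndon word: strictly lexicographically smaller than each proper nonempty suffix -/
def IsLyndon (w : List Bool) : Prop :=
  w ≠ [] ∧ ∀ v : List Bool, v <:+ w → v ≠ [] → v ≠ w → List.Lex (· < ·) w v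

/-- pre-necklace: a power of the letter `b`, or a prefix of a Lyndon word -/
def PreNecklace (w : List Bool) : Prop :=
  (∃ n, w = List.replicate n true) ∨ ∃ v, IsLyndon v ∧ w <+: v

/-!
The increments of `k ↦ Fa w k` are `0` or `1`, so the word `w'` that records them has
`Pa w' k = Fa w k`. A factor of `w'` starting at position `s` with length `k` then contains
`Fa w (s + k) - Fa w s ≤ Fa w k` letters `a`, by subadditivity of `Fa w`, and this is `Pa w' k`.
-/

lemma bddAbove_Fa_set (w : List Bool) (k : ℕ) :
    BddAbove {n | ∃ v : List Bool, v <:+: w ∧ v.length = k ∧ v.count false = n} :=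
  ⟨k, fun _ ⟨_, _, hl, hc⟩ => hc ▸ hl ▸ List.count_le_length⟩

lemma count_le_Fa {w v : List Bool} (h : v <:+: w) : v.count false ≤ Fa w v.length :=
  le_csSup (bddAbove_Fa_set w v.length) ⟨v, h, rfl, rfl⟩

lemma Fa_le_of_forall {w : List Bool} {k m : ℕ}
    (h : ∀ v : List Bool, v <:+: w → v.length = k → v.count false ≤ m) : Fa w k ≤ m := by
  rcases Set.eq_empty_or_nonempty
    {n | ∃ v : List Bool, v <:+: w ∧ v.length = k ∧ v.count false = n} with he | hne
  · rw [Fa, he, csSup_empty]; exact Nat.zero_le m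
  · exact csSup_le hne fun _ ⟨v, hv, hl, hc⟩ => hc ▸ h v hv hl

lemma exists_infix_count_eq_Fa {w : List Bool} {k : ℕ} (hk : k ≤ w.length) :
    ∃ v : List Bool, v <:+: w ∧ v.length = k ∧ v.count false = Fa w k := by
  have hne : {n | ∃ v : List Bool, v <:+: w ∧ v.length = k ∧ v.count false = n}.Nonempty :=
    ⟨_, w.take k, (w.take_prefix k).isInfix, by simp [hk], rfl⟩
  exact Nat.sSup_mem hne (bddAbove_Fa_set w k)

lemma Fa_zero (w : List Bool) : Fa w 0 = 0 :=
  Nat.le_zero.mp (Fa_le_of_forall fun v _ hl => by simp [List.length_eq_zero_iff.mp hl])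

lemma Fa_add_le (w : List Bool) (i j : ℕ) : Fa w (i + j) ≤ Fa w i + Fa w j := by
  refine Fa_le_of_forall fun v hv hl => ?_
  have hi := count_le_Fa ((v.take_prefix i).isInfix.trans hv)
  have hj := count_le_Fa ((v.drop_suffix i).isInfix.trans hv)
  rw [List.length_take_of_le (by omega)] at hi
  rw [List.length_drop, hl, Nat.add_sub_cancel_left] at hj
  calc v.count false = (v.take i).count false + (v.drop i).count false := by
        rw [← List.count_append, List.take_append_drop]
    _ ≤ Fa w i + Fa w j := Nat.add_le_add hi hj

lemma Fa_succ_le (w : List Bool) (k : ℕ) : Fa w (k + 1) ≤ Fa w k + 1 :=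
  (Fa_add_le w k 1).trans <| Nat.add_le_add_left
    (Fa_le_of_forall fun _ _ hl => hl ▸ List.count_le_length) _

/-- A factor that is not the whole word can be extended by one letter, to the right if possible
and otherwise to the left. -/
lemma exists_infix_length_succ {w v : List Bool} (h : v <:+: w) (hl : v.length < w.length) :
    ∃ v', v' <:+: w ∧ v'.length = v.length + 1 ∧ v.count false ≤ v'.count false := by
  obtain ⟨s, t, rfl⟩ := h
  match t with
  | x :: t' => exact ⟨v ++ [x], ⟨s, t', by simp⟩, by simp, by simp [List.count_append]⟩
  | [] =>
    have hs : s ≠ [] := by rintro rfl; simp at hl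
    refine ⟨s.getLast hs :: v, ⟨s.dropLast, [], ?_⟩, by simp, ?_⟩
    · simpa using congrArg (· ++ v) (List.dropLast_append_getLast hs)
    · rw [List.count_cons]; omega

lemma Fa_le_Fa_succ {w : List Bool} {k : ℕ} (hk : k < w.length) : Fa w k ≤ Fa w (k + 1) := by
  obtain ⟨v, hv, rfl, hc⟩ := exists_infix_count_eq_Fa hk.le
  obtain ⟨v', hv', hl', hc'⟩ := exists_infix_length_succ hv hk
  exact hc ▸ hl' ▸ hc'.trans (count_le_Fa hv')

lemma Pa_succ {u : List Bool} {k : ℕ} (hk : k < u.length) :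
    Pa u (k + 1) = Pa u k + if u[k] = false then 1 else 0 := by
  rw [Pa, Pa, List.take_add_one, List.getElem?_eq_getElem hk, Option.toList_some, List.count_append,
    List.count_singleton]
  cases u[k] <;> rfl

lemma Pa_append_infix (s v t : List Bool) :
    Pa (s ++ v ++ t) (s.length + v.length) = Pa (s ++ v ++ t) s.length + v.count false := by
  simp [Pa, List.take_append, List.count_append, List.take_of_length_le]

lemma Pa_le_Fa {u : List Bool} {k : ℕ} (hk : k ≤ u.length) : Pa u k ≤ Fa u k := by
  simpa [Pa, List.length_take_of_le hk] using count_le_Fa (u.take_prefix k).isInfix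

lemma Pa_eq_Fa_of_Pa_add_le {u : List Bool}
    (h : ∀ i j, i + j ≤ u.length → Pa u (i + j) ≤ Pa u i + Pa u j) :
    ∀ k ≤ u.length, Pa u k = Fa u k := by
  refine fun k hk => (Pa_le_Fa hk).antisymm (Fa_le_of_forall fun v hv hl => ?_)
  obtain ⟨s, t, rfl⟩ := hv
  subst hl
  exact Nat.le_of_add_le_add_left (Pa_append_infix s v t ▸ h s.length v.length (by simp))

/-- Letter `k` is `a` exactly when `Fa w` increases from `k` to `k + 1`. -/
noncomputable def prefixNormalForm (w : List Bool) : List Bool :=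
  (List.range w.length).map fun k => decide (Fa w (k + 1) = Fa w k)

lemma length_prefixNormalForm (w : List Bool) : (prefixNormalForm w).length = w.length := by
  simp [prefixNormalForm]

lemma Pa_prefixNormalForm (w : List Bool) : ∀ k ≤ w.length, Pa (prefixNormalForm w) k = Fa w k
  | 0, _ => by simp [Pa, Fa_zero]
  | k + 1, hk => by
    have hk' : k < (prefixNormalForm w).length := by rw [length_prefixNormalForm]; omega
    rw [Pa_succ hk', Pa_prefixNormalForm w k (by omega)]
    have := Fa_le_Fa_succ (w := w) (by omega : k < w.length)
    have := Fa_succ_le w k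
    by_cases hFa : Fa w (k + 1) = Fa w k
    · simp [prefixNormalForm, hFa]
    · simp [prefixNormalForm, hFa]; omega

theorem stmt3 (w : List Bool)
    (w' : List Bool)
    (hw' : w' = (List.range w.length).map fun k => decide (Fa w (k + 1) = Fa w k)) :
    ∀ k ≤ w'.length, Pa w' k = Fa w' k := by
  obtain rfl : w' = prefixNormalForm w := hw'
  refine Pa_eq_Fa_of_Pa_add_le fun i j hij => ?_
  rw [length_prefixNormalForm] at hij
  rw [Pa_prefixNormalForm w _ hij, Pa_prefixNormalForm w i (by omega),
    Pa_prefixNormalForm w j (by omega)]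
  exact Fa_add_le w i j
end

section
/- A Parikh vector q = (x,y) occurs in a binary word w (i.e., some factor v of w has |v|_a = x and |v|_b = y) if and only if x + y ≤ |w| and f_a(w, x+y) ≤ x ≤ F_a(w, x+y). -/
/-!
Sliding a window of length `k` one position to the right changes its number of `a`'s by at
most one, so by a discrete intermediate value argument every value between `fa w k` and `Fa w k`
is the number of `a`'s of some window; its number of `b`'s is then `k - x`.
-/

theorem Nat.exists_eq_of_step_le_one {f : ℕ → ℕ}
    (hf : ∀ i, f (i + 1) ≤ f i + 1 ∧ f i ≤ f (i + 1) + 1) {a b x : ℕ}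
    (hxa : f a ≤ x) (hxb : x ≤ f b) : ∃ i, min a b ≤ i ∧ i ≤ max a b ∧ f i = x := by
  suffices h : ∀ a n, min (f a) (f (a + n)) ≤ x → x ≤ max (f a) (f (a + n)) →
      ∃ i, a ≤ i ∧ i ≤ a + n ∧ f i = x by
    rcases le_total a b with hab | hba
    · obtain ⟨n, rfl⟩ := Nat.exists_eq_add_of_le hab
      obtain ⟨i, hi⟩ := h a n (by omega) (by omega)
      exact ⟨i, by omega⟩
    · obtain ⟨n, rfl⟩ := Nat.exists_eq_add_of_le hba
      obtain ⟨i, hi⟩ := h b n (by omega) (by omega)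
      exact ⟨i, by omega⟩
  intro a n
  induction n with
  | zero =>
    intro h₁ h₂
    simp only [Nat.add_zero] at h₁ h₂
    exact ⟨a, le_rfl, le_rfl, by omega⟩
  | succ n ih =>
    intro h₁ h₂
    rw [← Nat.add_assoc] at h₁ h₂ ⊢
    by_cases hn : min (f a) (f (a + n)) ≤ x ∧ x ≤ max (f a) (f (a + n))
    · obtain ⟨i, hi⟩ := ih hn.1 hn.2
      exact ⟨i, by omega⟩
    · have := hf (a + n)
      exact ⟨a + n + 1, by omega, by omega, by omega⟩

section Window

variable {α : Type*}

def window (l : List α) (i k : ℕ) : List α := (l.drop i).take k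

theorem length_window {l : List α} {i k : ℕ} (h : i + k ≤ l.length) :
    (window l i k).length = k := by
  simp only [window, List.length_take, List.length_drop]
  omega

theorem window_infix (l : List α) (i k : ℕ) : window l i k <:+: l :=
  ((l.drop i).take_prefix k).isInfix.trans (l.drop_suffix i).isInfix

theorem exists_window_eq_of_infix {v l : List α} (h : v <:+: l) :
    ∃ i, i + v.length ≤ l.length ∧ window l i v.length = v := by
  obtain ⟨s, t, rfl⟩ := h
  refine ⟨s.length, by simp, ?_⟩
  rw [window, List.append_assoc, List.drop_left, List.take_left]

theorem count_window_succ [BEq α] (l : List α) (a : α) (i k : ℕ) :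
    (window l (i + 1) k).count a ≤ (window l i k).count a + 1 ∧
      (window l i k).count a ≤ (window l (i + 1) k).count a + 1 := by
  have hone : ∀ j, (window l j 1).count a ≤ 1 :=
    fun j => List.count_le_length.trans (List.length_take_le _ _)
  -- the window of length `k + 1` at `i` is both `(i, k) ++ (i + k, 1)` and `(i, 1) ++ (i + 1, k)`
  have hright : (window l i (k + 1)).count a =
      (window l i k).count a + (window l (i + k) 1).count a := by
    rw [window, List.take_add, List.drop_drop, List.count_append, Nat.add_comm i k]; rfl
  have hleft : (window l i (1 + k)).count a =
      (window l i 1).count a + (window l (i + 1) k).count a := by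
    rw [window, List.take_add, List.drop_drop, List.count_append, Nat.add_comm i 1]; rfl
  rw [Nat.add_comm 1 k] at hleft
  have := hone i
  have := hone (i + k)
  omega

end Window

section FactorCounts

variable {w v : List Bool} {k x : ℕ}

theorem bddAbove_count_false_of_length_eq :
    BddAbove {n | ∃ v : List Bool, v <:+: w ∧ v.length = k ∧ v.count false = n} :=
  ⟨k, fun _ ⟨_, _, hv, hn⟩ => hn ▸ hv ▸ List.count_le_length⟩

theorem nonempty_count_false_of_length_eq (hk : k ≤ w.length) :
    {n | ∃ v : List Bool, v <:+: w ∧ v.length = k ∧ v.count false = n}.Nonempty :=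
  ⟨_, w.take k, (w.take_prefix k).isInfix, by simp [hk], rfl⟩

theorem fa_le_count_false (hv : v <:+: w) : fa w v.length ≤ v.count false :=
  Nat.sInf_le ⟨v, hv, rfl, rfl⟩

theorem count_false_le_Fa (hv : v <:+: w) : v.count false ≤ Fa w v.length :=
  le_csSup bddAbove_count_false_of_length_eq ⟨v, hv, rfl, rfl⟩

theorem exists_window_count_false_eq (hk : k ≤ w.length) (hfa : fa w k ≤ x)
    (hFa : x ≤ Fa w k) :
    ∃ i, i + k ≤ w.length ∧ (window w i k).count false = x := by
  obtain ⟨v₀, hv₀, hl₀, hc₀⟩ := Nat.sInf_mem (nonempty_count_false_of_length_eq hk)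
  obtain ⟨v₁, hv₁, hl₁, hc₁⟩ :=
    Nat.sSup_mem (nonempty_count_false_of_length_eq hk) bddAbove_count_false_of_length_eq
  obtain ⟨i₀, hi₀, hw₀⟩ := exists_window_eq_of_infix hv₀
  obtain ⟨i₁, hi₁, hw₁⟩ := exists_window_eq_of_infix hv₁
  rw [hl₀] at hi₀ hw₀
  rw [hl₁] at hi₁ hw₁
  obtain ⟨i, -, hi, hx⟩ := Nat.exists_eq_of_step_le_one
    (f := fun i => (window w i k).count false) (count_window_succ w false · k)
    (a := i₀) (b := i₁) (x := x) (by rw [hw₀, hc₀]; exact hfa)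
    (by rw [hw₁, hc₁]; exact hFa)
  exact ⟨i, by omega, hx⟩

end FactorCounts

theorem stmt9 (w : List Bool) (x y : ℕ) :
    (∃ v : List Bool, v <:+: w ∧ v.count false = x ∧ v.count true = y) ↔
      x + y ≤ w.length ∧ fa w (x + y) ≤ x ∧ x ≤ Fa w (x + y) := by
  constructor
  · rintro ⟨v, hv, rfl, rfl⟩
    rw [List.count_false_add_count_true]
    exact ⟨hv.length_le, fa_le_count_false hv, count_false_le_Fa hv⟩
  · rintro ⟨hk, hfa, hFa⟩
    obtain ⟨i, hi, hx⟩ := exists_window_count_false_eq hk hfa hFa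
    refine ⟨window w i (x + y), window_infix w i (x + y), hx, ?_⟩
    have := List.count_false_add_count_true (window w i (x + y))
    rw [length_window hi] at this
    omega
end

section
/- If w is a prefix normal word, then for every k ≥ 0, the words a^k w and w b^k are prefix normal. -/
/-! A factor of `a^k w` has the form `a^j v` with `j ≤ k` and `v` a factor of `w`, so it has
at most `j + P_w(|v|)` letters `a`. The prefix of `a^k w` of the same length is `a^k` followed by
the prefix of `w` of length `|v| - (k - j)`, and shortening a prefix of `w` by `k - j` letters
loses at most `k - j` letters `a`. For `w b^k`, a factor is `v b^i` with `v` a factor of `w`, and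
the count of `a`'s in prefixes of `w` is monotone in the length. -/

theorem List.exists_eq_append_of_infix_append {α : Type*} {l xs ys : List α}
    (h : l <:+: xs ++ ys) : ∃ l₁ l₂, l = l₁ ++ l₂ ∧ l₁ <:+: xs ∧ l₂ <:+: ys := by
  rcases List.infix_append_iff.1 h with h | h | ⟨l₁, l₂, rfl, h₁, h₂⟩
  · exact ⟨l, [], by simp, h, List.nil_infix⟩
  · exact ⟨[], l, rfl, List.nil_infix, h⟩
  · exact ⟨l₁, l₂, rfl, h₁.isInfix, h₂.isInfix⟩

section Pa

variable (w : List Bool)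

theorem Pa_mono : Monotone (Pa w) := fun _ _ h =>
  (List.take_prefix_take_left h).sublist.count_le _

theorem Pa_le (m : ℕ) : Pa w m ≤ m :=
  List.count_le_length.trans (List.length_take_le m w)

theorem Pa_add_le (m d : ℕ) : Pa w (m + d) ≤ Pa w m + d := by
  rw [Pa, Pa, List.take_add, List.count_append]
  exact Nat.add_le_add_left (List.count_le_length.trans (List.length_take_le _ _)) _

theorem Pa_le_Pa_sub_add (m d : ℕ) : Pa w m ≤ Pa w (m - d) + d := by
  rcases le_total d m with h | h
  · simpa [Nat.sub_add_cancel h] using Pa_add_le w (m - d) d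
  · exact (Pa_le w m).trans (h.trans (Nat.le_add_left _ _))

theorem Pa_replicate_false_append (k m : ℕ) :
    Pa (List.replicate k false ++ w) m = min m k + Pa w (m - k) := by
  simp [Pa, List.take_append, List.take_replicate, List.count_append]

theorem Pa_append_replicate_true (k m : ℕ) : Pa (w ++ List.replicate k true) m = Pa w m := by
  simp [Pa, List.take_append, List.take_replicate, List.count_append, List.count_replicate]

end Pa

namespace PrefixNormal

variable {w : List Bool}

theorem replicate_false_append (h : PrefixNormal w) (k : ℕ) :
    PrefixNormal (List.replicate k false ++ w) := by
  intro v hv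
  obtain ⟨v₁, v₂, rfl, hv₁, hv₂⟩ := List.exists_eq_append_of_infix_append hv
  obtain ⟨j, hjk, rfl⟩ := List.sublist_replicate_iff.1 hv₁.sublist
  have hcount := h v₂ hv₂
  have hle := Pa_le w v₂.length
  have hsub := Pa_le_Pa_sub_add w v₂.length (k - j)
  rw [show v₂.length - (k - j) = j + v₂.length - k by omega] at hsub
  rw [List.count_append, List.length_append, Pa_replicate_false_append,
    List.count_replicate_self, List.length_replicate]
  omega

theorem append_replicate_true (h : PrefixNormal w) (k : ℕ) :
    PrefixNormal (w ++ List.replicate k true) := by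
  intro v hv
  obtain ⟨v₁, v₂, rfl, hv₁, hv₂⟩ := List.exists_eq_append_of_infix_append hv
  have hv₂a : v₂.count false = 0 :=
    Nat.eq_zero_of_le_zero <| (hv₂.sublist.count_le false).trans (by simp [List.count_replicate])
  rw [List.count_append, List.length_append, Pa_append_replicate_true, hv₂a, Nat.add_zero]
  exact (h v₁ hv₁).trans (Pa_mono w (Nat.le_add_right _ _))

end PrefixNormal

theorem stmt14 (w : List Bool) (h : PrefixNormal w) (k : ℕ) :
    PrefixNormal (List.replicate k false ++ w) ∧
      PrefixNormal (w ++ List.replicate k true) :=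
  ⟨h.replicate_false_append k, h.append_replicate_true k⟩
end
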